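/- Let ⟨𝒬, Q₀⟩ be the instance produced by the reduction from an OGTP instance ⟨𝒮, ℱ⟩. If Fugitive starts the game Escape(Q₀, 𝒬) from D₀ = (G(w))[a,b] for some w ∈ Q₀ \ Q_start, then every final position H ∈ Ω(𝒬↔, D₀) satisfies H ⊨ (R(Q₀))(a,b), i.e. Fugitive loses (Principle I: Fugitive must start from (G(q))[a,b] with q ∈ Q_start). -/

import Mathlib

/-- A graph database (structure) over vertex type `V` and edge-label alphabet `γ`:
`D x c y` means that there is an edge from `x` to `y` labeled with `c`. -/
def DB (V γ : Type) : Type := V → γ → V → Prop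

/-- `pathSat D x w y` : the structure `D` satisfies `w(x,y)`, i.e. there is a directed
path from `x` to `y` whose consecutive edge labels spell the word `w`. -/
def pathSat {V γ : Type} (D : DB V γ) : V → List γ → V → Prop
  | x, [], y => x = y
  | x, c :: w, y => ∃ z, D x c z ∧ pathSat D z w y

/-- `D ⊨ L(x,y)` for a language `L` : some word of `L` labels a path from `x` to `y`. -/
def langSat {V γ : Type} (D : DB V γ) (L : Language γ) (x y : V) : Prop :=
  ∃ w ∈ L, pathSat D x w y

/-- The answer `L(D)` of the path query given by the language `L` on the database `D`. -/
def qry {V γ : Type} (L : Language γ) (D : DB V γ) : Set (V × V) :=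
  { p | langSat D L p.1 p.2 }

/-- All edge labels of `D` lie in the set `A`. -/
def labelsIn {V γ : Type} (D : DB V γ) (A : Set γ) : Prop :=
  ∀ x c y, D x c y → c ∈ A

/-- A language is regular iff it is the language of some regular expression. -/
def IsRegularLang {γ : Type} (L : Language γ) : Prop :=
  ∃ r : RegularExpression γ, r.matches' = L

/-! ### Red-green signature.  A letter of `Σ̄` is a pair `(color, a)` with
`color = true` meaning green and `color = false` meaning red. -/

/-- The green copy `G(w)` of a word `w`. -/
def greenW {γ : Type} (w : List γ) : List (Bool × γ) := w.map (fun c => (true, c))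

/-- The red copy `R(w)` of a word `w`. -/
def redW {γ : Type} (w : List γ) : List (Bool × γ) := w.map (fun c => (false, c))

/-- The green copy `G(L)` of a language `L`. -/
def greenL {γ : Type} (L : Language γ) : Language (Bool × γ) := greenW '' L

/-- The red copy `R(L)` of a language `L`. -/
def redL {γ : Type} (L : Language γ) : Language (Bool × γ) := redW '' L

/-- A constraint `L → L'` given by a pair of languages,
meaning `∀ x y, L(x,y) ⇒ L'(x,y)`. -/
structure RCon (γ : Type) where
  lhs : Language γ
  rhs : Language γ

/-- `D ⊨ t` for a single constraint `t`. -/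
def satRC {V γ : Type} (D : DB V γ) (t : RCon γ) : Prop :=
  ∀ x y, langSat D t.lhs x y → langSat D t.rhs x y

/-- `D ⊨ T` for a set `T` of constraints. -/
def satRCs {V γ : Type} (D : DB V γ) (T : Set (RCon γ)) : Prop :=
  ∀ t ∈ T, satRC D t

/-- `L→`, the regular constraint `G(L) → R(L)`. -/
def rcFwd {γ : Type} (L : Language γ) : RCon (Bool × γ) := ⟨greenL L, redL L⟩

/-- `L←`, the regular constraint `R(L) → G(L)`. -/
def rcBwd {γ : Type} (L : Language γ) : RCon (Bool × γ) := ⟨redL L, greenL L⟩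

/-- `𝒬↔ = ⋃_{L ∈ 𝒬} {L→, L←}`. -/
def biRC {γ : Type} (Qs : Set (Language γ)) : Set (RCon (Bool × γ)) :=
  rcFwd '' Qs ∪ rcBwd '' Qs

/-- A request is a triple `⟨x, y, t⟩`. -/
abbrev Req (V γ : Type) := V × V × RCon γ

/-- `rq T D` : the set of requests `⟨x,y,L→L'⟩` with `L → L' ∈ T`, `D ⊨ L(x,y)`
and `D ⊭ L'(x,y)`. -/
def rq {V γ : Type} (T : Set (RCon γ)) (D : DB V γ) : Set (Req V γ) :=
  { r | r.2.2 ∈ T ∧ langSat D r.2.2.lhs r.1 r.2.1 ∧ ¬ langSat D r.2.2.rhs r.1 r.2.1 }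

/-- A vertex of (i.e. active in) the structure `D`. -/
def activeV {V γ : Type} (D : DB V γ) (v : V) : Prop :=
  ∃ c u, D v c u ∨ D u c v

/-- The edge set of a chain whose consecutive vertices are listed in the first argument
and whose edge labels spell the second argument.  -/
def chainOf {V γ : Type} : List V → List γ → DB V γ
  | u :: v :: vs, c :: w => fun p d q => (p = u ∧ d = c ∧ q = v) ∨ chainOf (v :: vs) w p d q
  | _, _ => fun _ _ _ => False

/-- `D` is (exactly) the chain structure `w[x,y]` : its edges form a chain from `x` to `y`
labeled `w`, whose internal vertices are pairwise distinct and distinct from `x, y`. -/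
def IsChainStruct {V γ : Type} (D : DB V γ) (x : V) (w : List γ) (y : V) : Prop :=
  ∃ vs : List V, vs.length + 1 = w.length ∧ (x :: vs ++ [y]).Nodup ∧
    ∀ p c q, D p c q ↔ chainOf (x :: vs ++ [y]) w p c q

/-- `Step T D D'` : `D'` is obtained from `D` by simultaneously satisfying every request of
`rq T D` : for each request `⟨x,y,t⟩` a word `w` of the right-hand side of `t` is chosen and a
fresh path `w[x,y]` is added, the internal vertices of all the added paths being new
(not vertices of `D`) and pairwise distinct. -/
def Step {V γ : Type} (T : Set (RCon γ)) (D D' : DB V γ) : Prop :=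
  ∃ (wch : Req V γ → List γ) (vch : Req V γ → List V),
    (∀ r ∈ rq T D,
      wch r ∈ (r.2.2).rhs ∧ (vch r).length + 1 = (wch r).length ∧ (vch r).Nodup ∧
      ∀ v ∈ vch r, ¬ activeV D v ∧ v ≠ r.1 ∧ v ≠ r.2.1) ∧
    (∀ r ∈ rq T D, ∀ r' ∈ rq T D, r ≠ r' → ∀ v ∈ vch r, v ∉ vch r') ∧
    ∀ p c q, D' p c q ↔
      (D p c q ∨ ∃ r ∈ rq T D, chainOf (r.1 :: vch r ++ [r.2.1]) (wch r) p c q)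

/-- `H ∈ Ω(T, D₀)` : `H` is a final position, namely the union of a play
`D₀, D₁, D₂, …` with `Step T Dᵢ Dᵢ₊₁` for all `i`. -/
def FinalPos {V γ : Type} (T : Set (RCon γ)) (D₀ H : DB V γ) : Prop :=
  ∃ seq : ℕ → DB V γ, seq 0 = D₀ ∧ (∀ i, Step T (seq i) (seq (i + 1))) ∧
    ∀ p c q, H p c q ↔ ∃ i, seq i p c q

/-- `h` is a homomorphism from `D` to `M`. -/
def IsHom {V W γ : Type} (D : DB V γ) (M : DB W γ) (h : V → W) : Prop :=
  ∀ x c y, D x c y → M (h x) c (h y)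

/-! ### The alphabet of the reduction.
`Σ = {α, β, ω} ∪ Σ₀` with `Σ₀ = {A,B} × {H,V} × {W,C} × 𝒮`.
Conventions: in `Sig.base ab dir temp shade`,
`ab = true` means `A` and `ab = false` means `B`;
`dir = false` means `H` (horizontal) and `dir = true` means `V` (vertical);
`temp = true` means `W` (warm) and `temp = false` means `C` (cold);
shades are natural numbers, `black := 0`. -/
inductive Sig : Type where
  | alpha : Sig
  | beta : Sig
  | omega : Sig
  | base : Bool → Bool → Bool → ℕ → Sig
deriving DecidableEq

/-- `c` is a letter of `Σ₀` (its shade belonging to `S`). -/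
def inSigma0 (S : Finset ℕ) : Sig → Prop
  | .base _ _ _ s => s ∈ S
  | _ => False

/-- `c` is a letter of `Σ₀` with the indicated first three components
(its shade ranging over `S`). -/
def isL (S : Finset ℕ) (ab dir temp : Bool) (c : Sig) : Prop :=
  ∃ s ∈ S, c = Sig.base ab dir temp s

/-- All letters of the word `u` belong to `Σ₀`. -/
def allS0 (S : Finset ℕ) (u : List Sig) : Prop := ∀ c ∈ u, inSigma0 S c

/-- `Q¹ = ω`. -/
def Qg1 : Language Sig := {[Sig.omega]}

/-- `Q² = α + β`. -/
def Qg2 : Language Sig := {[Sig.alpha], [Sig.beta]}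

/-- `[B H W][A V W]`, the first summand of `Q³`. -/
def Qg3a (S : Finset ℕ) : Language Sig :=
  { w | ∃ c1 c2, w = [c1, c2] ∧ isL S false false true c1 ∧ isL S true true true c2 }

/-- `[B V C][A H C]`, the second summand of `Q³`. -/
def Qg3b (S : Finset ℕ) : Language Sig :=
  { w | ∃ c1 c2, w = [c1, c2] ∧ isL S false true false c1 ∧ isL S true false false c2 }

/-- `[A H C][B V C]`, the first summand of `Q⁴`. -/
def Qg4a (S : Finset ℕ) : Language Sig :=
  { w | ∃ c1 c2, w = [c1, c2] ∧ isL S true false false c1 ∧ isL S false true false c2 }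

/-- `[A V W][B H W]`, the second summand of `Q⁴`. -/
def Qg4b (S : Finset ℕ) : Language Sig :=
  { w | ∃ c1 c2, w = [c1, c2] ∧ isL S true true true c1 ∧ isL S false false true c2 }

/-- `[B V C]`, the first summand of `Q⁵`. -/
def Qg5a (S : Finset ℕ) : Language Sig := { w | ∃ c, w = [c] ∧ isL S false true false c }

/-- `[B V W]`, the second summand of `Q⁵`. -/
def Qg5b (S : Finset ℕ) : Language Sig := { w | ∃ c, w = [c] ∧ isL S false true true c }

/-- `[B H W]`, the first summand of `Q⁶`. -/
def Qg6a (S : Finset ℕ) : Language Sig := { w | ∃ c, w = [c] ∧ isL S false false true c }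

/-- `[B H C]`, the second summand of `Q⁶`. -/
def Qg6b (S : Finset ℕ) : Language Sig := { w | ∃ c, w = [c] ∧ isL S false false false c }

/-- `[A V W]`, the first summand of `Q⁷`. -/
def Qg7a (S : Finset ℕ) : Language Sig := { w | ∃ c, w = [c] ∧ isL S true true true c }

/-- `[A V C]`, the second summand of `Q⁷`. -/
def Qg7b (S : Finset ℕ) : Language Sig := { w | ∃ c, w = [c] ∧ isL S true true false c }

/-- `[A H C]`, the first summand of `Q⁸`. -/
def Qg8a (S : Finset ℕ) : Language Sig := { w | ∃ c, w = [c] ∧ isL S true false false c }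

/-- `[A H W]`, the second summand of `Q⁸`. -/
def Qg8b (S : Finset ℕ) : Language Sig := { w | ∃ c, w = [c] ∧ isL S true false true c }

/-- `𝒬_good`, the set of 8 good languages. -/
def Qgood (S : Finset ℕ) : Set (Language Sig) :=
  {Qg1, Qg2, Qg3a S + Qg3b S, Qg4a S + Qg4b S, Qg5a S + Qg5b S,
   Qg6a S + Qg6b S, Qg7a S + Qg7b S, Qg8a S + Qg8b S}

/-- `β (Σ_{s ∈ 𝒮∖{black}} [A V W s]) Σ₀* ω`. -/
def Qbad1 (S : Finset ℕ) : Language Sig :=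
  { w | ∃ s u, s ∈ S ∧ s ≠ 0 ∧ allS0 S u ∧
      w = Sig.beta :: Sig.base true true true s :: (u ++ [Sig.omega]) }

/-- `β Σ₀* (Σ_{s ∈ 𝒮∖{black}} [B H W s]) ω`. -/
def Qbad2 (S : Finset ℕ) : Language Sig :=
  { w | ∃ s u, s ∈ S ∧ s ≠ 0 ∧ allS0 S u ∧
      w = Sig.beta :: (u ++ [Sig.base false false true s, Sig.omega]) }

/-- `β Σ₀* [• d W s][• d' W s'] Σ₀* ω`, for a forbidden pair `⟨(d,s),(d',s')⟩`. -/
def QbadF (S : Finset ℕ) (d : Bool) (s : ℕ) (d' : Bool) (s' : ℕ) : Language Sig :=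
  { w | ∃ u u', ∃ b b' : Bool, allS0 S u ∧ allS0 S u' ∧
      w = Sig.beta :: (u ++ Sig.base b d true s :: Sig.base b' d' true s' :: (u' ++ [Sig.omega])) }

/-- `𝒬_bad`. -/
def Qbad (S : Finset ℕ) (F : Finset ((Bool × ℕ) × (Bool × ℕ))) : Set (Language Sig) :=
  {Qbad1 S, Qbad2 S} ∪ { L | ∃ p ∈ F, L = QbadF S p.1.1 p.1.2 p.2.1 p.2.2 }

/-- `α Σ₀* [• • W] Σ₀* ω`. -/
def Qugly1 (S : Finset ℕ) : Language Sig :=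
  { w | ∃ u c u', allS0 S u ∧ allS0 S u' ∧ inSigma0 S c ∧
      (∃ ab d s, c = Sig.base ab d true s) ∧
      w = Sig.alpha :: (u ++ c :: (u' ++ [Sig.omega])) }

/-- `β Σ₀* [• • C] Σ₀* ω`. -/
def Qugly2 (S : Finset ℕ) : Language Sig :=
  { w | ∃ u c u', allS0 S u ∧ allS0 S u' ∧ inSigma0 S c ∧
      (∃ ab d s, c = Sig.base ab d false s) ∧
      w = Sig.beta :: (u ++ c :: (u' ++ [Sig.omega])) }

/-- `𝒬_ugly`. -/
def Qugly (S : Finset ℕ) : Set (Language Sig) := {Qugly1 S, Qugly2 S}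

/-- `𝒬 = 𝒬_good ∪ 𝒬_bad ∪ 𝒬_ugly`. -/
def QQ (S : Finset ℕ) (F : Finset ((Bool × ℕ) × (Bool × ℕ))) : Set (Language Sig) :=
  Qgood S ∪ Qbad S F ∪ Qugly S

/-- `[A H C][B V C]`, the repeated block of `Q_start`. -/
def startBlock (S : Finset ℕ) : Language Sig :=
  { w | ∃ c1 c2, w = [c1, c2] ∧ isL S true false false c1 ∧ isL S false true false c2 }

/-- `Q_start = α ([A H C][B V C])⁺ ω`. -/
def Qstart (S : Finset ℕ) : Language Sig :=
  { w | ∃ u, u ∈ KStar.kstar (startBlock S) ∧ u ≠ [] ∧ w = Sig.alpha :: (u ++ [Sig.omega]) }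

/-- The sum of the languages `QbadF` over all forbidden pairs of `F`. -/
def QbadFSum (S : Finset ℕ) (F : Finset ((Bool × ℕ) × (Bool × ℕ))) : Language Sig :=
  { w | ∃ p ∈ F, w ∈ QbadF S p.1.1 p.1.2 p.2.1 p.2.2 }

/-- `Q₀ = Q_start + Σ_{L ∈ 𝒬_bad ∪ 𝒬_ugly} L`. -/
def Q0L (S : Finset ℕ) (F : Finset ((Bool × ℕ) × (Bool × ℕ))) : Language Sig :=
  Qstart S + Qbad1 S + Qbad2 S + QbadFSum S F + Qugly1 S + Qugly2 S

/-- The alphabet `Σ = {α, β, ω} ∪ Σ₀` of the reduction, as a set of letters. -/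
def SigAlph (S : Finset ℕ) : Set Sig :=
  {Sig.alpha, Sig.beta, Sig.omega} ∪ { c | inSigma0 S c }

/-!
Every word of `Q₀` outside `Q_start` lies in a bad or ugly language `L`, which belongs to `𝒬`
and is contained in `Q₀`.  The initial chain satisfies `G(L)(a,b)`, and `L→ ∈ 𝒬↔`, so the
request `⟨a, b, L→⟩` is either void from the start or answered in the first step; either way
`H ⊨ R(L)(a,b)`, hence `H ⊨ R(Q₀)(a,b)`.
-/

section Structures

variable {V γ : Type}

lemma pathSat_mono {D D' : DB V γ} (h : ∀ p c q, D p c q → D' p c q) :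
    ∀ {x : V} {w : List γ} {y : V}, pathSat D x w y → pathSat D' x w y
  | _, [], _, hxy => hxy
  | _, _ :: _, _, ⟨z, hz, hzy⟩ => ⟨z, h _ _ _ hz, pathSat_mono h hzy⟩

lemma langSat_mono {D D' : DB V γ} (h : ∀ p c q, D p c q → D' p c q) {L L' : Language γ}
    (hL : L ≤ L') {x y : V} (hs : langSat D L x y) : langSat D' L' x y :=
  let ⟨w, hw, hp⟩ := hs
  ⟨w, hL hw, pathSat_mono h hp⟩

lemma pathSat_chainOf :
    ∀ {x : V} {vs : List V} {w : List γ} {y : V}, vs.length + 1 = w.length →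
      pathSat (chainOf (x :: vs ++ [y]) w) x w y
  | _, [], [_], _, _ => ⟨_, Or.inl ⟨rfl, rfl, rfl⟩, rfl⟩
  | _, _ :: _, _ :: _, _, hlen =>
      ⟨_, Or.inl ⟨rfl, rfl, rfl⟩,
        pathSat_mono (fun _ _ _ => Or.inr) (pathSat_chainOf (by simpa using hlen))⟩

lemma IsChainStruct.pathSat {D : DB V γ} {x : V} {w : List γ} {y : V}
    (h : IsChainStruct D x w y) : pathSat D x w y :=
  let ⟨_, hlen, _, hD⟩ := h
  pathSat_mono (fun p c q => (hD p c q).2) (pathSat_chainOf hlen)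

lemma Step.le {T : Set (RCon γ)} {D D' : DB V γ} (h : Step T D D') :
    ∀ p c q, D p c q → D' p c q :=
  let ⟨_, _, _, _, hD'⟩ := h
  fun p c q hD => (hD' p c q).2 (Or.inl hD)

lemma Step.langSat_rhs {T : Set (RCon γ)} {D D' : DB V γ} (h : Step T D D') {t : RCon γ}
    (ht : t ∈ T) {x y : V} (hlhs : langSat D t.lhs x y) : langSat D' t.rhs x y := by
  by_cases hrhs : langSat D t.rhs x y
  · exact langSat_mono h.le le_rfl hrhs
  · have hreq : (x, y, t) ∈ rq T D := ⟨ht, hlhs, hrhs⟩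
    obtain ⟨wch, vch, hchoice, -, hD'⟩ := h
    obtain ⟨hw, hlen, -⟩ := hchoice _ hreq
    exact ⟨wch (x, y, t), hw,
      pathSat_mono (fun p c q hc => (hD' p c q).2 (Or.inr ⟨_, hreq, hc⟩)) (pathSat_chainOf hlen)⟩

lemma FinalPos.langSat_rhs {T : Set (RCon γ)} {D₀ H : DB V γ} (hH : FinalPos T D₀ H)
    {t : RCon γ} (ht : t ∈ T) {x y : V} (hlhs : langSat D₀ t.lhs x y) :
    langSat H t.rhs x y := by
  obtain ⟨seq, hseq0, hstep, hHiff⟩ := hH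
  subst hseq0
  exact langSat_mono (fun p c q hq => (hHiff p c q).2 ⟨1, hq⟩) le_rfl
    ((hstep 0).langSat_rhs ht hlhs)

end Structures

lemma greenL_mem {γ : Type} {L : Language γ} {w : List γ} (hw : w ∈ L) :
    greenW w ∈ greenL L :=
  Set.mem_image_of_mem _ hw

lemma redL_mono {γ : Type} {L L' : Language γ} (h : L ≤ L') : redL L ≤ redL L' :=
  Set.image_mono h

lemma rcFwd_mem_biRC {γ : Type} {Qs : Set (Language γ)} {L : Language γ} (hL : L ∈ Qs) :
    rcFwd L ∈ biRC Qs :=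
  Or.inl ⟨L, hL, rfl⟩

lemma exists_mem_QQ_of_mem_Q0L (S : Finset ℕ) (F : Finset ((Bool × ℕ) × (Bool × ℕ)))
    {w : List Sig} (hw : w ∈ Q0L S F) (hns : w ∉ Qstart S) :
    ∃ L ∈ QQ S F, w ∈ L ∧ L ≤ Q0L S F := by
  simp only [Q0L, Language.mem_add] at hw
  rcases hw with ((((hstart | hbad1) | hbad2) | ⟨p, hp, hbadF⟩) | hugly1) | hugly2
  · exact absurd hstart hns
  · refine ⟨Qbad1 S, by simp [QQ, Qbad], hbad1, fun u hu => show u ∈ Q0L S F from ?_⟩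
    simp only [Q0L, Language.mem_add]; tauto
  · refine ⟨Qbad2 S, by simp [QQ, Qbad], hbad2, fun u hu => show u ∈ Q0L S F from ?_⟩
    simp only [Q0L, Language.mem_add]; tauto
  · refine ⟨QbadF S p.1.1 p.1.2 p.2.1 p.2.2, Or.inl (Or.inr (Or.inr ⟨p, hp, rfl⟩)), hbadF,
      fun u hu => show u ∈ Q0L S F from ?_⟩
    simp only [Q0L, Language.mem_add]
    exact Or.inl (Or.inl (Or.inr ⟨p, hp, hu⟩))
  · refine ⟨Qugly1 S, by simp [QQ, Qugly], hugly1, fun u hu => show u ∈ Q0L S F from ?_⟩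
    simp only [Q0L, Language.mem_add]; tauto
  · refine ⟨Qugly2 S, by simp [QQ, Qugly], hugly2, fun u hu => show u ∈ Q0L S F from ?_⟩
    simp only [Q0L, Language.mem_add]; tauto

theorem principle_I_general (S : Finset ℕ) (F : Finset ((Bool × ℕ) × (Bool × ℕ)))
    {V : Type} (a b : V) (w : List Sig)
    (hw : w ∈ Q0L S F) (hns : w ∉ Qstart S)
    (D₀ H : DB V (Bool × Sig)) (hD₀ : IsChainStruct D₀ a (greenW w) b)
    (hH : FinalPos (biRC (QQ S F)) D₀ H) :
    langSat H (redL (Q0L S F)) a b := by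
  obtain ⟨L, hLQQ, hwL, hLQ0⟩ := exists_mem_QQ_of_mem_Q0L S F hw hns
  have hgreen : langSat D₀ (greenL L) a b := ⟨greenW w, greenL_mem hwL, hD₀.pathSat⟩
  have hred : langSat H (redL L) a b := hH.langSat_rhs (rcFwd_mem_biRC hLQQ) hgreen
  exact langSat_mono (fun _ _ _ => id) (redL_mono hLQ0) hred

/-- Principle I.  If Fugitive starts `Escape(Q₀, 𝒬)` from
`D₀ = (G(w))[a,b]` with `w ∈ Q₀ \ Q_start`, then every final position `H ∈ Ω(𝒬↔, D₀)`
satisfies `H ⊨ (R(Q₀))(a,b)`, i.e. Fugitive loses. -/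
theorem principle_I (S : Finset ℕ) (F : Finset ((Bool × ℕ) × (Bool × ℕ)))
    (hS : 0 ∈ S) (hF : ∀ p ∈ F, p.1.2 ∈ S ∧ p.2.2 ∈ S)
    {V : Type} (a b : V) (w : List Sig)
    (hw : w ∈ Q0L S F) (hns : w ∉ Qstart S)
    (D₀ H : DB V (Bool × Sig)) (hD₀ : IsChainStruct D₀ a (greenW w) b)
    (hH : FinalPos (biRC (QQ S F)) D₀ H) :
    langSat H (redL (Q0L S F)) a b :=
  principle_I_general S F a b w hw hns D₀ H hD₀ hH
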